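/- Let P = tconv{v_1, …, v_n} ⊆ ℝ^d be a d-polytrope, and for k ∈ {0, …, d} let c_k be the k-th corner of (v_1, …, v_n). Then P equals its cornered hull: P = ⋂_{k=0}^{d} (c_k + S̄_k). -/

import Mathlib

open Set

noncomputable section

/-- Extended (homogeneous) coordinates of a point of `TA^d ≅ ℝ^d`:
the 0-th coordinate is normalized to `0`. -/
def ext {d : ℕ} (x : Fin d → ℝ) : Fin (d + 1) → ℝ := Fin.cons 0 x

/-- The tropical combination of `(l, x)` and `(m, y)`. -/
def tropComb {d : ℕ} (l m : ℝ) (x y : Fin d → ℝ) : Fin d → ℝ :=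
  fun i => min (l + x i) (m + y i) - min l m

/-- A set is tropically convex if it is closed under tropical combinations. -/
def TropConvex {d : ℕ} (S : Set (Fin d → ℝ)) : Prop :=
  ∀ x ∈ S, ∀ y ∈ S, ∀ l m : ℝ, tropComb l m x y ∈ S

/-- The tropical convex hull: the intersection of all tropically convex supersets. -/
def tconv {d : ℕ} (V : Set (Fin d → ℝ)) : Set (Fin d → ℝ) :=
  ⋂₀ {S : Set (Fin d → ℝ) | TropConvex S ∧ V ⊆ S}

/-- A tropical polytope is the tropical convex hull of a finite set. -/
def IsTropPolytope {d : ℕ} (P : Set (Fin d → ℝ)) : Prop :=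
  ∃ V : Finset (Fin d → ℝ), P = tconv (V : Set (Fin d → ℝ))

/-- A polytrope is a tropical polytope which is also convex in the ordinary sense. -/
def IsPolytrope {d : ℕ} (P : Set (Fin d → ℝ)) : Prop :=
  IsTropPolytope P ∧ Convex ℝ P

/-- The `k`-th corner of the points `v_1, …, v_n`:
`(c_k)_j = min_i (v_{i,j} - v_{i,k}) - min_i (v_{i,0} - v_{i,k})` for `j = 1, …, d`
(homogeneous coordinates, `v_{i,0} := 0`). -/
def corner {d n : ℕ} (v : Fin n → Fin d → ℝ) (k : Fin (d + 1)) : Fin d → ℝ :=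
  fun j => (⨅ i, (ext (v i) j.succ - ext (v i) k)) - (⨅ i, (ext (v i) 0 - ext (v i) k))

/-- The `k`-th closed sector based at `a`:
`a + S̄_k = {x : x_k - a_k ≤ x_j - a_j for all j}` (homogeneous coordinates). -/
def sector {d : ℕ} (a : Fin d → ℝ) (k : Fin (d + 1)) : Set (Fin d → ℝ) :=
  {x | ∀ j : Fin (d + 1), ext x k - ext a k ≤ ext x j - ext a j}

/-!
A point `x` lies in `tconv V` iff every closed sector `x + S̄_K` meets `V` (it is then the
tropical combination of one such point per sector). In the chart `y ↦ y - y_K` of homogeneous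
coordinates, `w ∈ x + S̄_K` becomes the coordinatewise order `x ≤ w`, so for a polytrope the
image of `P` is a convex set lying below finitely many of its own points, the generators.
Such a set has a greatest element, which yields a generator `v_a` with `v_a ∈ x + S̄_K` for
all `x ∈ P`. Hence `min_i (v_{i,K} - v_{i,k}) = v_{a,K} - v_{a,k}`, and this is exactly the bound that
`x ∈ c_k + S̄_k` imposes on `x_K - x_k`; so every point of the cornered hull has `v_a` in its
`K`-th sector and lies in `P`.
-/

open Filter Topology in
theorem Convex.exists_isGreatest_of_subset_lowerClosure {E : Type*} [AddCommGroup E]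
    [PartialOrder E] [IsOrderedAddMonoid E] [Module ℝ E] [PosSMulReflectLE ℝ E]
    [TopologicalSpace E] [ClosedIicTopology E] [ContinuousAdd E] [ContinuousSMul ℝ E]
    {C S : Set E} (hC : Convex ℝ C) (hS : S.Finite) (hSne : S.Nonempty) (hSC : S ⊆ C)
    (hCS : C ⊆ lowerClosure S) : ∃ a ∈ S, IsGreatest C a := by
  obtain ⟨a, haS, hamax⟩ := hS.exists_maximal hSne
  suffices h : ∀ b ∈ S, b ≤ a by
    refine ⟨a, haS, hSC haS, fun y hy => ?_⟩
    obtain ⟨b, hbS, hyb⟩ := mem_lowerClosure.1 (hCS hy)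
    exact hyb.trans (h b hbS)
  intro b hbS
  -- Near `a`, the segment towards `b` can only be dominated by elements of `S` above `a`,
  -- and by maximality the only such element is `a` itself.
  have hnear : ∀ s ∈ S, ∀ᶠ t in 𝓝 (0 : ℝ), a + t • (b - a) ≤ s → a ≤ s := by
    intro s _
    by_cases has : a ≤ s
    · exact Eventually.of_forall fun _ _ => has
    · have hcont : Continuous fun t : ℝ => a + t • (b - a) := by fun_prop
      have h0 : a + (0 : ℝ) • (b - a) ∈ (Iic s)ᶜ := by simpa using has
      exact (hcont.continuousAt.eventually_mem (isClosed_Iic.isOpen_compl.mem_nhds h0)).mono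
        fun t ht hts => absurd hts ht
  have hsmall : ∀ᶠ t in 𝓝[>] (0 : ℝ), t ∈ Ioc 0 1 := Ioc_mem_nhdsGT one_pos
  obtain ⟨t, ⟨ht, ht1⟩, hts⟩ :=
    (hsmall.and (nhdsWithin_le_nhds (hS.eventually_all.2 hnear))).exists
  obtain ⟨s, hsS, hps⟩ := mem_lowerClosure.1
    (hCS (hC.add_smul_sub_mem (hSC haS) (hSC hbS) ⟨ht.le, ht1⟩))
  have hpa : a + t • (b - a) ≤ a := hps.trans (hamax hsS (hts s hsS hps))
  have hdir : t • (b - a) ≤ t • 0 := by simpa using hpa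
  exact sub_nonpos.1 (le_of_smul_le_smul_left hdir ht)

section

variable {d : ℕ}

@[simp] lemma ext_zero (x : Fin d → ℝ) : ext x 0 = 0 := rfl

@[simp] lemma ext_succ (x : Fin d → ℝ) (j : Fin d) : ext x j.succ = x j := rfl

lemma ext_tropComb (l m : ℝ) (x y : Fin d → ℝ) (k : Fin (d + 1)) :
    ext (tropComb l m x y) k = min (l + ext x k) (m + ext y k) - min l m := by
  cases k using Fin.cases <;> simp [tropComb]

lemma tropComb_comm (l m : ℝ) (x y : Fin d → ℝ) : tropComb l m x y = tropComb m l y x := by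
  funext i
  simp only [tropComb]
  rw [min_comm (l + x i), min_comm l]

lemma mem_sector_trans {w x z : Fin d → ℝ} {K : Fin (d + 1)} (hw : w ∈ sector x K)
    (hx : x ∈ sector z K) : w ∈ sector z K := fun j => by linarith [hw j, hx j]

lemma mem_sector_tropComb {l m : ℝ} {x y : Fin d → ℝ} {K : Fin (d + 1)}
    (h : l + ext x K ≤ m + ext y K) : x ∈ sector (tropComb l m x y) K := fun j => by
  simp only [ext_tropComb, min_eq_left h]
  linarith [min_le_left (l + ext x j) (m + ext y j)]

lemma tropConvex_setOf_forall_exists_mem_sector (V : Set (Fin d → ℝ)) :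
    TropConvex {x | ∀ K, ∃ w ∈ V, w ∈ sector x K} := by
  intro x hx y hy l m K
  rcases le_total (l + ext x K) (m + ext y K) with h | h
  · obtain ⟨w, hwV, hw⟩ := hx K
    exact ⟨w, hwV, mem_sector_trans hw (mem_sector_tropComb h)⟩
  · obtain ⟨w, hwV, hw⟩ := hy K
    exact ⟨w, hwV, mem_sector_trans hw (tropComb_comm l m x y ▸ mem_sector_tropComb h)⟩

lemma subset_tconv (V : Set (Fin d → ℝ)) : V ⊆ tconv V :=
  subset_sInter fun _ hS => hS.2

lemma tconv_subset {V S : Set (Fin d → ℝ)} (hS : TropConvex S) (hVS : V ⊆ S) :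
    tconv V ⊆ S :=
  sInter_subset_of_mem ⟨hS, hVS⟩

def dehomogenize (y : Fin (d + 1) → ℝ) : Fin d → ℝ := fun j => y j.succ - y 0

@[simp] lemma dehomogenize_ext (x : Fin d → ℝ) : dehomogenize (ext x) = x := by
  funext j; simp [dehomogenize]

lemma dehomogenize_const_add (c : ℝ) (y : Fin (d + 1) → ℝ) :
    dehomogenize (fun k => c + y k) = dehomogenize y := by
  funext j; simp only [dehomogenize]; ring

lemma TropConvex.dehomogenize_inf_mem {S : Set (Fin d → ℝ)} (hS : TropConvex S)
    {y y' : Fin (d + 1) → ℝ} (hy : dehomogenize y ∈ S) (hy' : dehomogenize y' ∈ S) :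
    dehomogenize (y ⊓ y') ∈ S := by
  convert hS _ hy _ hy' (y 0) (y' 0) using 1
  funext j
  simp [tropComb, dehomogenize]

lemma TropConvex.dehomogenize_inf'_mem {S : Set (Fin d → ℝ)} (hS : TropConvex S) {ι : Type*}
    {T : Finset ι} (hT : T.Nonempty) {g : ι → Fin (d + 1) → ℝ}
    (hg : ∀ i ∈ T, dehomogenize (g i) ∈ S) : dehomogenize (T.inf' hT g) ∈ S :=
  Finset.inf'_induction (p := fun y => dehomogenize y ∈ S) hT g
    (fun _ hy _ hy' => hS.dehomogenize_inf_mem hy hy') hg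

lemma mem_tconv_of_forall_exists_mem_sector {V : Set (Fin d → ℝ)} {x : Fin d → ℝ}
    (hx : ∀ K, ∃ w ∈ V, w ∈ sector x K) : x ∈ tconv V := by
  choose w hwV hw using hx
  intro S ⟨hS, hVS⟩
  set g : Fin (d + 1) → Fin (d + 1) → ℝ := fun K k => ext x K - ext (w K) K + ext (w K) k
  have hinf : Finset.univ.inf' Finset.univ_nonempty g = ext x := by
    funext k
    rw [Finset.inf'_apply]
    refine le_antisymm ((Finset.inf'_le _ (Finset.mem_univ k)).trans (by simp [g]))
      (Finset.le_inf' _ _ fun K _ => ?_)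
    simp only [g]
    linarith [hw K k]
  rw [← dehomogenize_ext x, ← hinf]
  exact hS.dehomogenize_inf'_mem _ fun K _ => by
    simpa only [g, dehomogenize_const_add, dehomogenize_ext] using hVS (hwV K)

theorem mem_tconv_iff {V : Set (Fin d → ℝ)} {x : Fin d → ℝ} :
    x ∈ tconv V ↔ ∀ K, ∃ w ∈ V, w ∈ sector x K :=
  ⟨fun hx => tconv_subset (tropConvex_setOf_forall_exists_mem_sector V)
    (fun w hw _ => ⟨w, hw, fun _ => by simp⟩) hx, mem_tconv_of_forall_exists_mem_sector⟩

lemma ext_add (x y : Fin d → ℝ) : ext (x + y) = ext x + ext y := by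
  funext k; cases k using Fin.cases <;> simp

lemma ext_smul (c : ℝ) (x : Fin d → ℝ) : ext (c • x) = c • ext x := by
  funext k; cases k using Fin.cases <;> simp

def normalizeAt (K : Fin (d + 1)) : (Fin d → ℝ) →ₗ[ℝ] Fin (d + 1) → ℝ where
  toFun x k := ext x k - ext x K
  map_add' x y := by funext k; simp only [ext_add, Pi.add_apply]; ring
  map_smul' c x := by
    funext k
    simp only [ext_smul, Pi.smul_apply, smul_eq_mul, RingHom.id_apply]
    ring

lemma mem_sector_iff_normalizeAt_le {w x : Fin d → ℝ} {K : Fin (d + 1)} :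
    w ∈ sector x K ↔ normalizeAt K x ≤ normalizeAt K w := by
  refine forall_congr' fun j => ?_
  simp only [normalizeAt, LinearMap.coe_mk, AddHom.coe_mk]
  constructor <;> intro h <;> linarith

theorem exists_forall_mem_sector_of_convex {ι : Type*} [Finite ι] [Nonempty ι]
    (v : ι → Fin d → ℝ) (hconv : Convex ℝ (tconv (range v))) (K : Fin (d + 1)) :
    ∃ a, ∀ x ∈ tconv (range v), v a ∈ sector x K := by
  have hdom : normalizeAt K '' tconv (range v) ⊆ lowerClosure (range (normalizeAt K ∘ v)) := by
    rintro _ ⟨x, hx, rfl⟩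
    obtain ⟨_, ⟨i, rfl⟩, hi⟩ := mem_tconv_iff.1 hx K
    exact mem_lowerClosure.2 ⟨_, mem_range_self i, mem_sector_iff_normalizeAt_le.1 hi⟩
  obtain ⟨_, ⟨a, rfl⟩, -, ha⟩ :=
    (hconv.linear_image (normalizeAt K)).exists_isGreatest_of_subset_lowerClosure
      (finite_range _) (range_nonempty _)
      ((range_comp _ _).trans_subset (image_mono (subset_tconv _))) hdom
  exact ⟨a, fun x hx => mem_sector_iff_normalizeAt_le.2 (ha (mem_image_of_mem _ hx))⟩

end

section

variable {d n : ℕ}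

lemma ext_corner (v : Fin n → Fin d → ℝ) (K j : Fin (d + 1)) :
    ext (corner v K) j =
      (⨅ i, (ext (v i) j - ext (v i) K)) - ⨅ i, (ext (v i) 0 - ext (v i) K) := by
  cases j using Fin.cases <;> simp [corner]

lemma mem_sector_corner_iff {v : Fin n → Fin d → ℝ} {x : Fin d → ℝ} {K : Fin (d + 1)} :
    x ∈ sector (corner v K) K ↔
      ∀ j, ⨅ i, (ext (v i) j - ext (v i) K) ≤ ext x j - ext x K := by
  refine forall_congr' fun j => ?_
  simp only [ext_corner, sub_self, Real.iInf_const_zero]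
  constructor <;> intro h <;> linarith

lemma tconv_subset_sector_corner (v : Fin n → Fin d → ℝ) (K : Fin (d + 1)) :
    tconv (range v) ⊆ sector (corner v K) K := by
  intro x hx
  refine mem_sector_corner_iff.2 fun j => ?_
  obtain ⟨_, ⟨i, rfl⟩, hi⟩ := mem_tconv_iff.1 hx j
  exact (ciInf_le (finite_range _).bddBelow i).trans (by linarith [hi K])

lemma mem_sector_of_forall_mem_sector_corner {v : Fin n → Fin d → ℝ} {x : Fin d → ℝ}
    {a : Fin n} {K : Fin (d + 1)} (ha : ∀ i, v a ∈ sector (v i) K)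
    (hx : ∀ k, x ∈ sector (corner v k) k) : v a ∈ sector x K := by
  intro k
  have hinf : ext (v a) K - ext (v a) k ≤ ⨅ i, (ext (v i) K - ext (v i) k) :=
    have : Nonempty (Fin n) := ⟨a⟩
    le_ciInf fun i => by linarith [ha i k]
  linarith [mem_sector_corner_iff.1 (hx k) K]

end

theorem polytrope_eq_cornered_hull_general {d n : ℕ} (hn : 0 < n)
    (v : Fin n → Fin d → ℝ)
    (hP : IsPolytrope (tconv (Set.range v))) :
    tconv (Set.range v) = ⋂ k : Fin (d + 1), sector (corner v k) k := by
  have : Nonempty (Fin n) := Fin.pos_iff_nonempty.1 hn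
  refine (subset_iInter (tconv_subset_sector_corner v)).antisymm fun x hx => ?_
  refine mem_tconv_iff.2 fun K => ?_
  obtain ⟨a, ha⟩ := exists_forall_mem_sector_of_convex v hP.2 K
  exact ⟨v a, mem_range_self a, mem_sector_of_forall_mem_sector_corner
    (fun i => ha _ (subset_tconv _ (mem_range_self i))) (mem_iInter.1 hx)⟩

/-- A `d`-polytrope `P = tconv{v_1,…,v_n}` equals its cornered hull,
the intersection of the `d+1` cornered sectors `c_k + S̄_k`. -/
theorem polytrope_eq_cornered_hull {d n : ℕ} (hn : 0 < n)
    (v : Fin n → Fin d → ℝ)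
    (hP : IsPolytrope (tconv (Set.range v)))
    (hdim : affineSpan ℝ (tconv (Set.range v)) = ⊤) :
    tconv (Set.range v) = ⋂ k : Fin (d + 1), sector (corner v k) k :=
  polytrope_eq_cornered_hull_general hn v hP
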